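/- Let k be a field, let M, N be positive integers, and let u, v, w ∈ ℤ² be such that u, v form a ℤ-basis of ℤ². Let P = {w + s·u + t·v : s, t ∈ ℝ, 0 ≤ s ≤ M, 0 ≤ t ≤ N} ⊂ ℝ². Suppose f ∈ k[x,y] is a polynomial, write c_q for the coefficient in f of the monomial x^{q₁}·y^{q₂} for q = (q₁,q₂) ∈ ℤ², and assume: (i) every (i,j) with c_{(i,j)} ≠ 0 lies in P ∩ ℤ², and neither x nor y divides f; (ii) c_{w + t·v} = 0 for all integers t with 0 ≤ t ≤ N−1, and c_{w + N·v + s·u} = 0 for all integers s with 1 ≤ s ≤ M; (iii) c_{w + u} ≠ 0 and c_{w + N·v} ≠ 0. Then f is irreducible in k[x,y]. -/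

import Mathlib

open MvPolynomial Finset

/-- The coefficient of the monomial `x^{q₁} y^{q₂}` in `f ∈ k[x,y]`, for `q = (q₁, q₂) ∈ ℤ²`
(it is `0` when `q` has a negative entry). Here `X 0` plays the role of `x` and `X 1` of `y`. -/
noncomputable def coeffZ {k : Type*} [CommSemiring k] (f : MvPolynomial (Fin 2) k)
    (q : ℤ × ℤ) : k :=
  if 0 ≤ q.1 ∧ 0 ≤ q.2 then
    MvPolynomial.coeff (Finsupp.single 0 q.1.toNat + Finsupp.single 1 q.2.toNat) f
  else 0

/-!
In the coordinates `(s, t)` of the basis `u, v` centred at `w`, the support of `f` lies in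
`[0, M] × [0, N]`, the only monomial of `f` on the edges `s = 0` and `t = N` is the corner
`(0, N)`, and `(1, 0)` is a monomial of `f`. For the weight `N s + t` the initial form of `f` is
therefore the binomial on `(1, 0)` and `(0, N)`, of `s`-width `1`. Initial forms are
multiplicative and widths additive, so in a factorization `f = g h` one factor, say `g`, has an
initial form of `s`-width `0`. That initial form is then a monomial, so the initial form of `h`,
hence `h` itself, has `t`-width `N`, the whole `t`-width of `f`. Thus `g` has `t`-width `0`, is
its own top `t`-face, and divides the top `t`-face of `f`, the monomial at `(0, N)`. So `g` is a
monomial, and a constant because neither `x` nor `y` divides `f`.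
-/

open Finsupp (weight)

namespace Finsupp

theorem weight_apply_single_one {ι M : Type*} [AddCommMonoid M] (φ : (ι →₀ ℕ) →+ M) :
    weight (fun i => φ (single i 1)) = φ :=
  addHom_ext fun i n => by
    rw [weight_single, ← map_nsmul, smul_single_one]

theorem weight_zsmul_add {ι : Type*} (c : ℤ) (s t : ι → ℤ) (m : ι →₀ ℕ) :
    weight (c • s + t) m = c * weight s m + weight t m := by
  rw [weight_apply, weight_apply, weight_apply, mul_sum, ← sum_add]
  refine sum_congr fun i _ => ?_
  simp only [Pi.add_apply, Pi.smul_apply, smul_eq_mul]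
  ring

end Finsupp

namespace MvPolynomial

variable {ι R M : Type*}

theorem weightedHomogeneousComponent_add_mul [CommSemiring R] [AddCommMonoid M] [LinearOrder M]
    [IsOrderedCancelAddMonoid M] {w : ι → M} {a b : M} {p q : MvPolynomial ι R}
    (hp : ∀ m ∈ p.support, a ≤ weight w m) (hq : ∀ m ∈ q.support, b ≤ weight w m) :
    weightedHomogeneousComponent w (a + b) (p * q) =
      weightedHomogeneousComponent w a p * weightedHomogeneousComponent w b q := by
  classical
  ext n
  simp only [coeff_weightedHomogeneousComponent, coeff_mul]
  split_ifs with hn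
  · refine Finset.sum_congr rfl fun x hx => ?_
    have hx : weight w x.1 + weight w x.2 = a + b := by
      rw [← map_add, mem_antidiagonal.1 hx, hn]
    by_cases hab : weight w x.1 = a ∧ weight w x.2 = b
    · rw [if_pos hab.1, if_pos hab.2]
    · have : coeff x.1 p * coeff x.2 q = 0 := by
        by_contra hpq
        obtain ⟨h₁, h₂⟩ := (add_eq_add_iff_eq_and_eq
          (hp _ (mem_support_iff.2 (left_ne_zero_of_mul hpq)))
          (hq _ (mem_support_iff.2 (right_ne_zero_of_mul hpq)))).1 hx.symm
        exact hab ⟨h₁.symm, h₂.symm⟩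
      rw [this]
      split_ifs <;> simp_all
  · refine (Finset.sum_eq_zero fun x hx => ?_).symm
    split_ifs with h₁ h₂
    · exact absurd (by rw [← mem_antidiagonal.1 hx, map_add, h₁, h₂]) hn
    all_goals simp

variable [CommSemiring R] [AddCommGroup M]

theorem weight_neg_apply (w : ι → M) (m : ι →₀ ℕ) : weight (-w) m = -weight w m := by
  simp [Finsupp.weight_apply]

variable [LinearOrder M] (w : ι → M)

/-- By convention `minWeight w 0 = 0`. -/
noncomputable def minWeight (p : MvPolynomial ι R) : M :=
  if h : p.support.Nonempty then p.support.inf' h (weight w) else 0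

noncomputable def maxWeight (p : MvPolynomial ι R) : M := -minWeight (-w) p

noncomputable def width (p : MvPolynomial ι R) : M := maxWeight w p - minWeight w p

noncomputable def initialForm (p : MvPolynomial ι R) : MvPolynomial ι R :=
  weightedHomogeneousComponent w (minWeight w p) p

variable {w} {p q : MvPolynomial ι R} {m n : ι →₀ ℕ} {c : M}

theorem minWeight_le (hm : m ∈ p.support) : minWeight w p ≤ weight w m := by
  rw [minWeight, dif_pos ⟨m, hm⟩]
  exact Finset.inf'_le _ hm

theorem exists_weight_eq_minWeight (hp : p ≠ 0) : ∃ m ∈ p.support, weight w m = minWeight w p := by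
  have hne := support_nonempty.2 hp
  obtain ⟨m, hm, he⟩ := Finset.exists_mem_eq_inf' hne (weight w)
  exact ⟨m, hm, by rw [minWeight, dif_pos hne, he]⟩

theorem le_minWeight (hp : p ≠ 0) (h : ∀ m ∈ p.support, c ≤ weight w m) : c ≤ minWeight w p := by
  obtain ⟨m, hm, he⟩ := exists_weight_eq_minWeight (w := w) hp
  exact he ▸ h m hm

theorem exists_weight_eq_maxWeight (hp : p ≠ 0) : ∃ m ∈ p.support, weight w m = maxWeight w p := by
  obtain ⟨m, hm, he⟩ := exists_weight_eq_minWeight (w := -w) hp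
  exact ⟨m, hm, by rw [maxWeight, ← he, weight_neg_apply, neg_neg]⟩

theorem width_le (h : ∀ m ∈ p.support, ∀ n ∈ p.support, weight w n - weight w m ≤ c) (hp : p ≠ 0) :
    width w p ≤ c := by
  obtain ⟨m, hm, hmin⟩ := exists_weight_eq_minWeight (w := w) hp
  obtain ⟨n, hn, hmax⟩ := exists_weight_eq_maxWeight (w := w) hp
  rw [width, ← hmin, ← hmax]
  exact h m hm n hn

theorem width_neg : width (-w) p = width w p := by
  simp only [width, maxWeight, neg_neg]
  abel

theorem mem_support_initialForm :
    m ∈ (initialForm w p).support ↔ m ∈ p.support ∧ weight w m = minWeight w p := by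
  classical
  rw [initialForm, support_weightedHomogeneousComponent, Finset.mem_filter]

theorem support_initialForm_subset : (initialForm w p).support ⊆ p.support :=
  fun _ hm => (mem_support_initialForm.1 hm).1

theorem initialForm_ne_zero (hp : p ≠ 0) : initialForm w p ≠ 0 := by
  obtain ⟨m, hm, he⟩ := exists_weight_eq_minWeight (w := w) hp
  exact ne_zero_iff.2 ⟨m, mem_support_iff.1 (mem_support_initialForm.2 ⟨hm, he⟩)⟩

variable [IsOrderedAddMonoid M]

theorem le_maxWeight (hm : m ∈ p.support) : weight w m ≤ maxWeight w p := by
  simpa [maxWeight, weight_neg_apply, le_neg] using minWeight_le (w := -w) hm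

theorem sub_le_width (hm : m ∈ p.support) (hn : n ∈ p.support) :
    weight w n - weight w m ≤ width w p :=
  sub_le_sub (le_maxWeight hn) (minWeight_le hm)

theorem width_nonneg (w : ι → M) (p : MvPolynomial ι R) : 0 ≤ width w p := by
  rcases eq_or_ne p 0 with rfl | hp
  · simp [width, maxWeight, minWeight]
  obtain ⟨m, hm, -⟩ := exists_weight_eq_minWeight (w := w) hp
  simpa using sub_le_width (w := w) hm hm

theorem width_mono (hp : p ≠ 0) (h : p.support ⊆ q.support) : width w p ≤ width w q :=
  width_le (fun _ hm _ hn => sub_le_width (h hm) (h hn)) hp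

theorem width_C (r : R) : width w (C r : MvPolynomial ι R) = 0 := by
  classical
  rcases eq_or_ne r 0 with rfl | hr
  · simp [width, maxWeight, minWeight]
  refine le_antisymm (width_le (fun m hm n hn => ?_) (C_ne_zero.2 hr)) (width_nonneg w _)
  rw [support_C, if_neg hr, Finset.mem_singleton] at hm hn
  simp [hm, hn]

theorem weight_eq_minWeight_of_width_eq_zero (h : width w p = 0) (hm : m ∈ p.support) :
    weight w m = minWeight w p :=
  le_antisymm (by simpa [width, sub_eq_zero.1 h] using le_maxWeight (w := w) hm)
    (minWeight_le hm)

theorem initialForm_eq_self_of_width_eq_zero (h : width w p = 0) : initialForm w p = p :=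
  weightedHomogeneousComponent_eq_self fun _ hm =>
    weight_eq_minWeight_of_width_eq_zero h (mem_support_iff.2 hm)

theorem eq_monomial_of_width_eq_zero {s t : ι → M}
    (hst : Function.Injective fun m : ι →₀ ℕ => (weight s m, weight t m))
    (hs : width s p = 0) (ht : width t p = 0) (hm : m ∈ p.support) :
    p = monomial m (coeff m p) :=
  eq_monomial_of_support_subset_singleton fun _ hn => hst <| Prod.ext
    ((weight_eq_minWeight_of_width_eq_zero hs hn).trans
      (weight_eq_minWeight_of_width_eq_zero hs hm).symm)
    ((weight_eq_minWeight_of_width_eq_zero ht hn).trans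
      (weight_eq_minWeight_of_width_eq_zero ht hm).symm)

variable [NoZeroDivisors R]

theorem minWeight_mul_of_ne_zero (hp : p ≠ 0) (hq : q ≠ 0) :
    minWeight w (p * q) = minWeight w p + minWeight w q ∧
      initialForm w (p * q) = initialForm w p * initialForm w q := by
  classical
  have hlow : ∀ n ∈ (p * q).support, minWeight w p + minWeight w q ≤ weight w n := by
    intro n hn
    obtain ⟨x, hx, y, hy, rfl⟩ := Finset.mem_add.1 (support_mul p q hn)
    rw [map_add]
    exact add_le_add (minWeight_le hx) (minWeight_le hy)
  have hcomp := weightedHomogeneousComponent_add_mul (fun _ => minWeight_le (w := w) (p := p))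
    (fun _ => minWeight_le (w := w) (p := q))
  obtain ⟨n, hn⟩ := ne_zero_iff.1
    (hcomp ▸ mul_ne_zero (initialForm_ne_zero (w := w) hp) (initialForm_ne_zero (w := w) hq))
  rw [coeff_weightedHomogeneousComponent] at hn
  split_ifs at hn with hwn
  · have hmin : minWeight w (p * q) = minWeight w p + minWeight w q :=
      le_antisymm (hwn ▸ minWeight_le (mem_support_iff.2 hn))
        (le_minWeight (mul_ne_zero hp hq) hlow)
    exact ⟨hmin, by rw [initialForm, hmin, hcomp]; rfl⟩
  · exact absurd rfl hn

theorem minWeight_mul (hp : p ≠ 0) (hq : q ≠ 0) :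
    minWeight w (p * q) = minWeight w p + minWeight w q :=
  (minWeight_mul_of_ne_zero hp hq).1

theorem initialForm_mul (hp : p ≠ 0) (hq : q ≠ 0) :
    initialForm w (p * q) = initialForm w p * initialForm w q :=
  (minWeight_mul_of_ne_zero hp hq).2

theorem width_mul (hp : p ≠ 0) (hq : q ≠ 0) :
    width w (p * q) = width w p + width w q := by
  simp only [width, maxWeight, minWeight_mul hp hq]
  abel

theorem isUnit_monomial_of_dvd {k : Type*} [Field k] {f : MvPolynomial ι k} {c : k}
    (hf : ∀ i, ¬ X i ∣ f) (hc : c ≠ 0) (h : monomial m c ∣ f) : IsUnit (monomial m c) := by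
  obtain rfl : m = 0 := by
    by_contra hm
    obtain ⟨i, hi⟩ := Finsupp.ne_iff.1 hm
    exact hf i ((X_dvd_monomial.2 (Or.inr hi)).trans h)
  exact (IsUnit.mk0 c hc).map C

end MvPolynomial

/-- In the coordinates `(weight s - a, weight t - b)` the support of `f` lies in the strip
`0 ≤ s, 0 ≤ t ≤ N`, meets the lines `s = 0` and `t = N` only in the corner `m₂ = (0, N)`, and
contains `m₁ = (1, 0)`. -/
structure EisensteinData {ι R : Type*} [CommSemiring R] (s t : ι → ℤ) (a b : ℤ) (N : ℕ)
    (m₁ m₂ : ι →₀ ℕ) (f : MvPolynomial ι R) : Prop where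
  injective : Function.Injective fun m : ι →₀ ℕ => (weight s m, weight t m)
  not_X_dvd : ∀ i, ¬ X i ∣ f
  m₁_mem : m₁ ∈ f.support
  weight_s_m₁ : weight s m₁ = a + 1
  weight_t_m₁ : weight t m₁ = b
  m₂_mem : m₂ ∈ f.support
  weight_s_m₂ : weight s m₂ = a
  weight_t_m₂ : weight t m₂ = b + N
  le_weight_s : ∀ m ∈ f.support, a ≤ weight s m
  le_weight_t : ∀ m ∈ f.support, b ≤ weight t m
  weight_t_le : ∀ m ∈ f.support, weight t m ≤ b + N
  eq_m₂_of_weight_s : ∀ m ∈ f.support, weight s m = a → m = m₂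
  eq_m₂_of_weight_t : ∀ m ∈ f.support, weight t m = b + N → m = m₂

namespace EisensteinData

section

variable {ι R : Type*} [CommSemiring R] {s t : ι → ℤ} {a b : ℤ} {N : ℕ} {m₁ m₂ m : ι →₀ ℕ}
  {f g h : MvPolynomial ι R}

/-- For `f` with `EisensteinData`, this weight is minimal on the support of `f` exactly at the
edge `{m₁, m₂}`. -/
def edgeWeight (s t : ι → ℤ) (N : ℕ) : ι → ℤ := (N : ℤ) • s + t

theorem weight_edgeWeight (m : ι →₀ ℕ) :
    weight (edgeWeight s t N) m = N * weight s m + weight t m :=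
  Finsupp.weight_zsmul_add _ _ _ _

theorem ne_zero (hf : EisensteinData s t a b N m₁ m₂ f) : f ≠ 0 :=
  ne_zero_iff.2 ⟨m₁, mem_support_iff.1 hf.m₁_mem⟩

theorem le_weight_edgeWeight (hf : EisensteinData s t a b N m₁ m₂ f) (hm : m ∈ f.support) :
    N * (a + 1) + b ≤ weight (edgeWeight s t N) m := by
  rw [weight_edgeWeight]
  rcases (hf.le_weight_s m hm).eq_or_lt with hs | hs
  · rw [hf.eq_m₂_of_weight_s m hm hs.symm, hf.weight_s_m₂, hf.weight_t_m₂]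
    linarith
  · nlinarith [hf.le_weight_t m hm]

theorem eq_of_weight_edgeWeight_eq (hf : EisensteinData s t a b N m₁ m₂ f) (hm : m ∈ f.support)
    (hL : weight (edgeWeight s t N) m = N * (a + 1) + b) : m = m₁ ∨ m = m₂ := by
  rw [weight_edgeWeight] at hL
  rcases (hf.le_weight_s m hm).eq_or_lt with hs | hs
  · exact Or.inr (hf.eq_m₂_of_weight_s m hm hs.symm)
  have hN : 0 ≤ (N : ℤ) * (weight s m - (a + 1)) := mul_nonneg (by positivity) (by linarith)
  have ht : weight t m = b := by linarith [hf.le_weight_t m hm]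
  rcases N.eq_zero_or_pos with rfl | hNpos
  · exact Or.inr (hf.eq_m₂_of_weight_t m hm (by simpa using ht))
  have hs : weight s m = a + 1 := by
    have : (N : ℤ) * (weight s m - (a + 1)) = 0 := by linarith
    rcases mul_eq_zero.1 this with h | h
    · omega
    · linarith
  exact Or.inl (hf.injective (Prod.ext (by simp [hs, hf.weight_s_m₁])
    (by simp [ht, hf.weight_t_m₁])))

theorem minWeight_edgeWeight (hf : EisensteinData s t a b N m₁ m₂ f) :
    minWeight (edgeWeight s t N) f = N * (a + 1) + b :=
  le_antisymm
    (by simpa only [weight_edgeWeight, hf.weight_s_m₁, hf.weight_t_m₁] using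
      minWeight_le (w := edgeWeight s t N) hf.m₁_mem)
    (le_minWeight hf.ne_zero fun _ => hf.le_weight_edgeWeight)

theorem mem_support_initialForm_edgeWeight (hf : EisensteinData s t a b N m₁ m₂ f) :
    m ∈ (initialForm (edgeWeight s t N) f).support ↔ m = m₁ ∨ m = m₂ := by
  rw [mem_support_initialForm, hf.minWeight_edgeWeight]
  refine ⟨fun ⟨hm, hL⟩ => hf.eq_of_weight_edgeWeight_eq hm hL, ?_⟩
  rintro (rfl | rfl)
  · exact ⟨hf.m₁_mem, by rw [weight_edgeWeight, hf.weight_s_m₁, hf.weight_t_m₁]⟩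
  · exact ⟨hf.m₂_mem, by rw [weight_edgeWeight, hf.weight_s_m₂, hf.weight_t_m₂]; ring⟩

theorem width_s_initialForm_edgeWeight_le (hf : EisensteinData s t a b N m₁ m₂ f) :
    width s (initialForm (edgeWeight s t N) f) ≤ 1 := by
  refine width_le (fun m hm n hn => ?_) (initialForm_ne_zero hf.ne_zero)
  rcases hf.mem_support_initialForm_edgeWeight.1 hm with rfl | rfl <;>
    rcases hf.mem_support_initialForm_edgeWeight.1 hn with rfl | rfl <;>
    simp [hf.weight_s_m₁, hf.weight_s_m₂]

theorem le_width_t_initialForm_edgeWeight (hf : EisensteinData s t a b N m₁ m₂ f) :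
    (N : ℤ) ≤ width t (initialForm (edgeWeight s t N) f) := by
  have := sub_le_width (w := t) (hf.mem_support_initialForm_edgeWeight.2 (Or.inl rfl))
    (hf.mem_support_initialForm_edgeWeight.2 (Or.inr rfl))
  rwa [hf.weight_t_m₁, hf.weight_t_m₂, add_sub_cancel_left] at this

theorem width_t_le (hf : EisensteinData s t a b N m₁ m₂ f) : width t f ≤ N :=
  width_le (fun m hm n hn => by linarith [hf.le_weight_t m hm, hf.weight_t_le n hn]) hf.ne_zero

theorem width_s_initialForm_neg_t (hf : EisensteinData s t a b N m₁ m₂ f) :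
    width s (initialForm (-t) f) = 0 := by
  have hmin : minWeight (-t) f = -(b + N) := le_antisymm
    (by simpa only [weight_neg_apply, hf.weight_t_m₂] using minWeight_le (w := -t) hf.m₂_mem)
    (le_minWeight hf.ne_zero fun m hm => by
      rw [weight_neg_apply, neg_le_neg_iff]; exact hf.weight_t_le m hm)
  have hsupp : ∀ m ∈ (initialForm (-t) f).support, m = m₂ := fun m hm => by
    obtain ⟨hm, he⟩ := mem_support_initialForm.1 hm
    rw [hmin, weight_neg_apply, neg_inj] at he
    exact hf.eq_m₂_of_weight_t m hm he
  refine le_antisymm (width_le (fun m hm n hn => ?_) (initialForm_ne_zero hf.ne_zero))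
    (width_nonneg _ _)
  rw [hsupp m hm, hsupp n hn, sub_self]

variable [NoZeroDivisors R]

theorem width_t_eq_zero_of_mul_eq (hf : EisensteinData s t a b N m₁ m₂ f) (hgh : f = g * h)
    (hG : width s (initialForm (edgeWeight s t N) g) = 0) : width t g = 0 := by
  have hg : g ≠ 0 := left_ne_zero_of_mul (hgh ▸ hf.ne_zero)
  have hh : h ≠ 0 := right_ne_zero_of_mul (hgh ▸ hf.ne_zero)
  have hGt : width t (initialForm (edgeWeight s t N) g) = 0 := by
    refine le_antisymm (width_le (fun m hm n hn => ?_) (initialForm_ne_zero hg))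
      (width_nonneg _ _)
    have hL := (mem_support_initialForm.1 hm).2.trans (mem_support_initialForm.1 hn).2.symm
    have hs := (weight_eq_minWeight_of_width_eq_zero hG hm).trans
      (weight_eq_minWeight_of_width_eq_zero hG hn).symm
    rw [weight_edgeWeight, weight_edgeWeight, hs] at hL
    linarith
  have hH : (N : ℤ) ≤ width t h := calc
    (N : ℤ) ≤ width t (initialForm (edgeWeight s t N) f) := hf.le_width_t_initialForm_edgeWeight
    _ = width t (initialForm (edgeWeight s t N) h) := by
      rw [hgh, initialForm_mul hg hh, width_mul (initialForm_ne_zero hg) (initialForm_ne_zero hh),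
        hGt, zero_add]
    _ ≤ width t h := width_mono (initialForm_ne_zero hh) support_initialForm_subset
  have := hf.width_t_le
  rw [hgh, width_mul hg hh] at this
  exact le_antisymm (by linarith) (width_nonneg _ _)

theorem width_s_eq_zero_of_mul_eq (hf : EisensteinData s t a b N m₁ m₂ f) (hgh : f = g * h)
    (hg : width t g = 0) : width s g = 0 := by
  have hg0 : g ≠ 0 := left_ne_zero_of_mul (hgh ▸ hf.ne_zero)
  have hh0 : h ≠ 0 := right_ne_zero_of_mul (hgh ▸ hf.ne_zero)
  have := hf.width_s_initialForm_neg_t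
  rw [hgh, initialForm_mul hg0 hh0,
    initialForm_eq_self_of_width_eq_zero ((width_neg (w := t)).trans hg),
    width_mul hg0 (initialForm_ne_zero hh0)] at this
  exact le_antisymm (by linarith [width_nonneg s (initialForm (-t) h)]) (width_nonneg _ _)

end

variable {ι k : Type*} [Field k] {s t : ι → ℤ} {a b : ℤ} {N : ℕ} {m₁ m₂ : ι →₀ ℕ}
  {f g h : MvPolynomial ι k}

theorem isUnit_of_mul_eq (hf : EisensteinData s t a b N m₁ m₂ f) (hgh : f = g * h)
    (hG : width s (initialForm (edgeWeight s t N) g) = 0) : IsUnit g := by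
  have ht := hf.width_t_eq_zero_of_mul_eq hgh hG
  obtain ⟨m, hm⟩ := support_nonempty.2 (left_ne_zero_of_mul (hgh ▸ hf.ne_zero))
  have hmono :=
    eq_monomial_of_width_eq_zero hf.injective (hf.width_s_eq_zero_of_mul_eq hgh ht) ht hm
  rw [hmono] at hgh ⊢
  exact isUnit_monomial_of_dvd hf.not_X_dvd (mem_support_iff.1 hm) ⟨h, hgh⟩

theorem irreducible (hf : EisensteinData s t a b N m₁ m₂ f) : Irreducible f := by
  refine ⟨fun hu => ?_, fun g h hgh => ?_⟩
  · obtain ⟨g, hfg⟩ := hu.exists_right_inv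
    have hg : g ≠ 0 := right_ne_zero_of_mul (hfg ▸ one_ne_zero)
    have h1 := width_mul (w := s) hf.ne_zero hg
    rw [hfg, ← C_1, width_C] at h1
    have h2 := sub_le_width (w := s) hf.m₂_mem hf.m₁_mem
    rw [hf.weight_s_m₁, hf.weight_s_m₂] at h2
    linarith [width_nonneg s g]
  · have hg : g ≠ 0 := left_ne_zero_of_mul (hgh ▸ hf.ne_zero)
    have hh : h ≠ 0 := right_ne_zero_of_mul (hgh ▸ hf.ne_zero)
    have hsum := hf.width_s_initialForm_edgeWeight_le
    rw [hgh, initialForm_mul hg hh,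
      width_mul (initialForm_ne_zero hg) (initialForm_ne_zero hh)] at hsum
    have hG := width_nonneg s (initialForm (edgeWeight s t N) g)
    have hH := width_nonneg s (initialForm (edgeWeight s t N) h)
    rcases (show width s (initialForm (edgeWeight s t N) g) = 0 ∨
        width s (initialForm (edgeWeight s t N) h) = 0 by omega) with hG0 | hH0
    · exact Or.inl (hf.isUnit_of_mul_eq hgh hG0)
    · exact Or.inr (hf.isUnit_of_mul_eq (hgh.trans (mul_comm g h)) hH0)

end EisensteinData

noncomputable def exponentZ : (Fin 2 →₀ ℕ) →+ ℤ × ℤ :=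
  ((Nat.castAddMonoidHom ℤ).comp (Finsupp.applyAddHom 0)).prod
    ((Nat.castAddMonoidHom ℤ).comp (Finsupp.applyAddHom 1))

theorem exponentZ_apply (m : Fin 2 →₀ ℕ) : exponentZ m = ((m 0 : ℤ), (m 1 : ℤ)) := rfl

theorem single_zero_add_single_one (m : Fin 2 →₀ ℕ) :
    Finsupp.single 0 (m 0) + Finsupp.single 1 (m 1) = m := by
  ext i
  fin_cases i <;> simp

theorem exponentZ_injective : Function.Injective exponentZ := fun m n h => by
  simp only [exponentZ_apply, Prod.mk.injEq, Nat.cast_inj] at h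
  rw [← single_zero_add_single_one m, ← single_zero_add_single_one n, h.1, h.2]

theorem coeffZ_exponentZ {k : Type*} [CommSemiring k] (f : MvPolynomial (Fin 2) k)
    (m : Fin 2 →₀ ℕ) : coeffZ f (exponentZ m) = coeff m f := by
  simp [coeffZ, exponentZ_apply, single_zero_add_single_one]

theorem exists_mem_support_exponentZ_eq {k : Type*} [CommSemiring k] {f : MvPolynomial (Fin 2) k}
    {q : ℤ × ℤ} (h : coeffZ f q ≠ 0) : ∃ m ∈ f.support, exponentZ m = q := by
  unfold coeffZ at h
  split_ifs at h with hq
  · refine ⟨_, mem_support_iff.2 h, ?_⟩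
    simp [exponentZ_apply, hq.1, hq.2]
  · exact absurd rfl h

theorem map_eq_fst_zsmul_add_snd_zsmul {F A : Type*} [AddCommGroup A] [FunLike F (ℤ × ℤ) A]
    [AddMonoidHomClass F (ℤ × ℤ) A] (φ : F) (q : ℤ × ℤ) :
    φ q = q.1 • φ (1, 0) + q.2 • φ (0, 1) := by
  conv_lhs => rw [show q = q.1 • ((1 : ℤ), (0 : ℤ)) + q.2 • ((0 : ℤ), (1 : ℤ)) by ext <;> simp]
  rw [map_add, map_zsmul, map_zsmul]

section Basis

variable {u v : ℤ × ℤ} {e : ℤ × ℤ ≃+ ℤ × ℤ}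

theorem symm_apply_fst_basis (he : ∀ st, e st = st.1 • u + st.2 • v) : e.symm u = (1, 0) :=
  e.symm_apply_eq.2 (by simp [he])

theorem symm_apply_snd_basis (he : ∀ st, e st = st.1 • u + st.2 • v) : e.symm v = (0, 1) :=
  e.symm_apply_eq.2 (by simp [he])

theorem cast_symm_apply_of_eq_real_combination (he : ∀ st, e st = st.1 • u + st.2 • v)
    {x : ℤ × ℤ} {s t : ℝ} (h₁ : (x.1 : ℝ) = s * u.1 + t * v.1)
    (h₂ : (x.2 : ℝ) = s * u.2 + t * v.2) :
    ((e.symm x).1 : ℝ) = s ∧ ((e.symm x).2 : ℝ) = t := by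
  have hu := symm_apply_fst_basis he
  have hv := symm_apply_snd_basis he
  rw [map_eq_fst_zsmul_add_snd_zsmul e.symm] at hu hv ⊢
  simp only [Prod.ext_iff, Prod.fst_add, Prod.snd_add, Prod.smul_fst, Prod.smul_snd,
    smul_eq_mul] at hu hv ⊢
  obtain ⟨hu₁, hu₂⟩ := hu
  obtain ⟨hv₁, hv₂⟩ := hv
  -- `hu`, `hv` say that the matrix of `e.symm` inverts that of `(u, v)`, hence also over `ℝ`.
  rify at hu₁ hu₂ hv₁ hv₂
  push_cast
  rw [h₁, h₂]
  constructor
  · linear_combination s * hu₁ + t * hv₁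
  · linear_combination s * hu₂ + t * hv₂

end Basis

theorem weight_coord_fst (e : ℤ × ℤ ≃+ ℤ × ℤ) (m : Fin 2 →₀ ℕ) :
    weight (fun i => (e.symm (exponentZ (Finsupp.single i 1))).1) m = (e.symm (exponentZ m)).1 :=
  DFunLike.congr_fun (Finsupp.weight_apply_single_one
    ((AddMonoidHom.fst ℤ ℤ).comp (e.symm.toAddMonoidHom.comp exponentZ))) m

theorem weight_coord_snd (e : ℤ × ℤ ≃+ ℤ × ℤ) (m : Fin 2 →₀ ℕ) :
    weight (fun i => (e.symm (exponentZ (Finsupp.single i 1))).2) m = (e.symm (exponentZ m)).2 :=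
  DFunLike.congr_fun (Finsupp.weight_apply_single_one
    ((AddMonoidHom.snd ℤ ℤ).comp (e.symm.toAddMonoidHom.comp exponentZ))) m

def SupportedInParallelogram {k : Type*} [CommSemiring k] (f : MvPolynomial (Fin 2) k)
    (u v w : ℤ × ℤ) (M N : ℕ) : Prop :=
  ∀ i j : ℕ, coeff (Finsupp.single 0 i + Finsupp.single 1 j) f ≠ 0 →
    ∃ s t : ℝ, 0 ≤ s ∧ s ≤ M ∧ 0 ≤ t ∧ t ≤ N ∧
      ((i : ℝ), (j : ℝ)) =
        ((w.1 : ℝ) + s * (u.1 : ℝ) + t * (v.1 : ℝ), (w.2 : ℝ) + s * (u.2 : ℝ) + t * (v.2 : ℝ))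

section Parallelogram

variable {k : Type*} [CommSemiring k] {M N : ℕ} {u v w : ℤ × ℤ} {e : ℤ × ℤ ≃+ ℤ × ℤ}
  {f : MvPolynomial (Fin 2) k} {m m₁ m₂ : Fin 2 →₀ ℕ}

theorem mem_box_of_mem_support (he : ∀ st, e st = st.1 • u + st.2 • v)
    (hsupp : SupportedInParallelogram f u v w M N) (hm : m ∈ f.support) :
    (e.symm w).1 ≤ (e.symm (exponentZ m)).1 ∧ (e.symm (exponentZ m)).1 ≤ (e.symm w).1 + M ∧
      (e.symm w).2 ≤ (e.symm (exponentZ m)).2 ∧ (e.symm (exponentZ m)).2 ≤ (e.symm w).2 + N := by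
  obtain ⟨s, t, hs₀, hsM, ht₀, htN, hst⟩ :=
    hsupp (m 0) (m 1) (by rwa [single_zero_add_single_one, ← mem_support_iff])
  simp only [Prod.mk.injEq] at hst
  obtain ⟨hs, ht⟩ := cast_symm_apply_of_eq_real_combination he (x := exponentZ m - w)
    (s := s) (t := t) (by push_cast [Prod.fst_sub, exponentZ_apply]; linarith)
    (by push_cast [Prod.snd_sub, exponentZ_apply]; linarith)
  push_cast [map_sub, Prod.fst_sub, Prod.snd_sub] at hs ht
  refine ⟨?_, ?_, ?_, ?_⟩ <;> rify <;> linarith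

theorem eq_of_symm_fst_eq (he : ∀ st, e st = st.1 • u + st.2 • v)
    (hsupp : SupportedInParallelogram f u v w M N)
    (hc1 : ∀ t : ℤ, 0 ≤ t → t ≤ (N : ℤ) - 1 → coeffZ f (w + t • v) = 0)
    (he₂ : exponentZ m₂ = w + (N : ℤ) • v) (hm : m ∈ f.support)
    (h : (e.symm (exponentZ m)).1 = (e.symm w).1) : m = m₂ := by
  obtain ⟨-, -, ht₀, htN⟩ := mem_box_of_mem_support he hsupp hm
  set n := (e.symm (exponentZ m)).2 - (e.symm w).2
  have hexp : exponentZ m = w + n • v := e.symm.injective <| by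
    rw [map_add, map_zsmul, symm_apply_snd_basis he]
    ext <;> simp [h, n]
  rcases (show n ≤ N - 1 ∨ n = N by omega) with hn | hn
  · have := hc1 n (by omega) hn
    rw [← hexp, coeffZ_exponentZ] at this
    exact absurd this (mem_support_iff.1 hm)
  · exact exponentZ_injective (by rw [hexp, he₂, hn])

theorem eq_of_symm_snd_eq (he : ∀ st, e st = st.1 • u + st.2 • v)
    (hsupp : SupportedInParallelogram f u v w M N)
    (hc1 : ∀ t : ℤ, 0 ≤ t → t ≤ (N : ℤ) - 1 → coeffZ f (w + t • v) = 0)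
    (hc2 : ∀ s : ℤ, 1 ≤ s → s ≤ (M : ℤ) → coeffZ f (w + (N : ℤ) • v + s • u) = 0)
    (he₂ : exponentZ m₂ = w + (N : ℤ) • v) (hm : m ∈ f.support)
    (h : (e.symm (exponentZ m)).2 = (e.symm w).2 + N) : m = m₂ := by
  obtain ⟨hs₀, hsM, -, -⟩ := mem_box_of_mem_support he hsupp hm
  set n := (e.symm (exponentZ m)).1 - (e.symm w).1
  rcases (show n = 0 ∨ 1 ≤ n by omega) with hn | hn
  · exact eq_of_symm_fst_eq he hsupp hc1 he₂ hm (by omega)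
  have hexp : exponentZ m = w + (N : ℤ) • v + n • u := e.symm.injective <| by
    rw [map_add, map_add, map_zsmul, map_zsmul, symm_apply_fst_basis he, symm_apply_snd_basis he]
    ext <;> simp [h, n]
  have := hc2 n hn (by omega)
  rw [← hexp, coeffZ_exponentZ] at this
  exact absurd this (mem_support_iff.1 hm)

theorem eisensteinData_of_parallelogram (he : ∀ st, e st = st.1 • u + st.2 • v)
    (hsupp : SupportedInParallelogram f u v w M N)
    (hx : ¬ (X 0 : MvPolynomial (Fin 2) k) ∣ f) (hy : ¬ (X 1 : MvPolynomial (Fin 2) k) ∣ f)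
    (hc1 : ∀ t : ℤ, 0 ≤ t → t ≤ (N : ℤ) - 1 → coeffZ f (w + t • v) = 0)
    (hc2 : ∀ s : ℤ, 1 ≤ s → s ≤ (M : ℤ) → coeffZ f (w + (N : ℤ) • v + s • u) = 0)
    (hm₁ : m₁ ∈ f.support) (he₁ : exponentZ m₁ = w + u)
    (hm₂ : m₂ ∈ f.support) (he₂ : exponentZ m₂ = w + (N : ℤ) • v) :
    EisensteinData (fun i => (e.symm (exponentZ (Finsupp.single i 1))).1)
      (fun i => (e.symm (exponentZ (Finsupp.single i 1))).2) (e.symm w).1 (e.symm w).2 N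
      m₁ m₂ f := by
  have hbox := fun m (hm : m ∈ f.support) => mem_box_of_mem_support he hsupp hm
  refine ⟨fun m n h => ?_, Fin.forall_fin_two.2 ⟨hx, hy⟩, hm₁, ?_, ?_, hm₂, ?_, ?_,
    fun m hm => ?_, fun m hm => ?_, fun m hm => ?_, fun m hm hs => ?_, fun m hm ht => ?_⟩ <;>
    simp only [weight_coord_fst, weight_coord_snd] at *
  · exact exponentZ_injective (e.symm.injective h)
  · simp [he₁, symm_apply_fst_basis he]
  · simp [he₁, symm_apply_fst_basis he]
  · rw [he₂, map_add, map_zsmul, symm_apply_snd_basis he]; simp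
  · rw [he₂, map_add, map_zsmul, symm_apply_snd_basis he]; simp
  · exact (hbox m hm).1
  · exact (hbox m hm).2.2.1
  · exact (hbox m hm).2.2.2
  · exact eq_of_symm_fst_eq he hsupp hc1 he₂ hm hs
  · exact eq_of_symm_snd_eq he hsupp hc1 hc2 he₂ hm ht

end Parallelogram

theorem stmt_7_general (k : Type*) [Field k] (M N : ℕ)
    (u v w : ℤ × ℤ)
    (hbasis : Function.Bijective (fun st : ℤ × ℤ => st.1 • u + st.2 • v))
    (f : MvPolynomial (Fin 2) k)
    -- (i) the Newton polygon of `f` is contained in the parallelogram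
    -- `P = {w + s·u + t·v : 0 ≤ s ≤ M, 0 ≤ t ≤ N}`, and neither `x` nor `y` divides `f`
    (hsupp : ∀ i j : ℕ, MvPolynomial.coeff (Finsupp.single 0 i + Finsupp.single 1 j) f ≠ 0 →
      ∃ s t : ℝ, 0 ≤ s ∧ s ≤ M ∧ 0 ≤ t ∧ t ≤ N ∧
        ((i : ℝ), (j : ℝ)) =
          ((w.1 : ℝ) + s * (u.1 : ℝ) + t * (v.1 : ℝ),
           (w.2 : ℝ) + s * (u.2 : ℝ) + t * (v.2 : ℝ)))
    (hx : ¬ (X 0 : MvPolynomial (Fin 2) k) ∣ f)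
    (hy : ¬ (X 1 : MvPolynomial (Fin 2) k) ∣ f)
    -- (iii)
    (hc1 : ∀ t : ℤ, 0 ≤ t → t ≤ (N : ℤ) - 1 → coeffZ f (w + t • v) = 0)
    (hc2 : ∀ s : ℤ, 1 ≤ s → s ≤ (M : ℤ) → coeffZ f (w + (N : ℤ) • v + s • u) = 0)
    -- (iv)
    (hu : coeffZ f (w + u) ≠ 0)
    (hv : coeffZ f (w + (N : ℤ) • v) ≠ 0) :
    Irreducible f := by
  obtain ⟨e, he⟩ : ∃ e : ℤ × ℤ ≃+ ℤ × ℤ, ∀ st, e st = st.1 • u + st.2 • v :=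
    ⟨AddEquiv.ofBijective ((zmultiplesHom _ u).coprod (zmultiplesHom _ v)) hbasis, fun _ => rfl⟩
  obtain ⟨m₁, hm₁, he₁⟩ := exists_mem_support_exponentZ_eq hu
  obtain ⟨m₂, hm₂, he₂⟩ := exists_mem_support_exponentZ_eq hv
  exact (eisensteinData_of_parallelogram he hsupp hx hy hc1 hc2 hm₁ he₁ hm₂ he₂).irreducible

theorem stmt_7 (k : Type*) [Field k] (M N : ℕ) (hM : 0 < M) (hN : 0 < N)
    (u v w : ℤ × ℤ)
    (hbasis : Function.Bijective (fun st : ℤ × ℤ => st.1 • u + st.2 • v))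
    (f : MvPolynomial (Fin 2) k)
    -- (i) the Newton polygon of `f` is contained in the parallelogram
    -- `P = {w + s·u + t·v : 0 ≤ s ≤ M, 0 ≤ t ≤ N}`, and neither `x` nor `y` divides `f`
    (hsupp : ∀ i j : ℕ, MvPolynomial.coeff (Finsupp.single 0 i + Finsupp.single 1 j) f ≠ 0 →
      ∃ s t : ℝ, 0 ≤ s ∧ s ≤ M ∧ 0 ≤ t ∧ t ≤ N ∧
        ((i : ℝ), (j : ℝ)) =
          ((w.1 : ℝ) + s * (u.1 : ℝ) + t * (v.1 : ℝ),
           (w.2 : ℝ) + s * (u.2 : ℝ) + t * (v.2 : ℝ)))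
    (hx : ¬ (X 0 : MvPolynomial (Fin 2) k) ∣ f)
    (hy : ¬ (X 1 : MvPolynomial (Fin 2) k) ∣ f)
    -- (iii)
    (hc1 : ∀ t : ℤ, 0 ≤ t → t ≤ (N : ℤ) - 1 → coeffZ f (w + t • v) = 0)
    (hc2 : ∀ s : ℤ, 1 ≤ s → s ≤ (M : ℤ) → coeffZ f (w + (N : ℤ) • v + s • u) = 0)
    -- (iv)
    (hu : coeffZ f (w + u) ≠ 0)
    (hv : coeffZ f (w + (N : ℤ) • v) ≠ 0) :
    Irreducible f :=
  stmt_7_general k M N u v w hbasis f hsupp hx hy hc1 hc2 hu hv
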